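/- Let d≥1, r≥1, a>0, and μ>0. There exists a constant C = C(d,a) > 0, independent of r, μ, and x, such that for all x∈Λ_r: Σ_{u∈ℤ^d, u≠0} ||x+ru||_∞^{−(d−a)} · e^{−μ||x+ru||_∞} ≤ C · e^{−μr/4} · μ^{−a} · r^{−d}. -/

import Mathlib

open scoped BigOperators

noncomputable section

namespace IsingPlateau

/-- The spin value (±1) associated to a Boolean. -/
def spin (b : Bool) : ℝ := if b then 1 else -1

/-- Hamiltonian for coupling constants `J`:
`H(σ) = -(1/2) Σ_x Σ_y J x y σ_x σ_y`, so that each unordered pair is counted once. -/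
def hamiltonian {V : Type*} [Fintype V] (J : V → V → ℝ) (σ : V → Bool) : ℝ :=
  -(1 / 2) * ∑ x : V, ∑ y : V, J x y * spin (σ x) * spin (σ y)

/-- Ising expectation of an observable `f` of the spin configuration. -/
def isingExpect {V : Type*} [Fintype V] [DecidableEq V] (J : V → V → ℝ) (β : ℝ)
    (f : (V → ℝ) → ℝ) : ℝ :=
  (∑ σ : V → Bool, f (fun v => spin (σ v)) * Real.exp (-β * hamiltonian J σ)) /
    ∑ σ : V → Bool, Real.exp (-β * hamiltonian J σ)

/-- The two-point function `⟨σ_x σ_y⟩`. -/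
def corr {V : Type*} [Fintype V] [DecidableEq V] (J : V → V → ℝ) (β : ℝ) (x y : V) : ℝ :=
  isingExpect J β fun s => s x * s y

/-- The four-point function `⟨σ_x σ_y σ_z σ_w⟩`. -/
def corr4 {V : Type*} [Fintype V] [DecidableEq V] (J : V → V → ℝ) (β : ℝ) (x y z w : V) : ℝ :=
  isingExpect J β fun s => s x * s y * s z * s w

/-- Nearest-neighbour adjacency on `Fin d → A`. -/
def nnAdj {d : ℕ} {A : Type*} [AddGroup A] [One A] (x y : Fin d → A) : Prop :=
  ∃ i : Fin d, y = x + Pi.single i 1 ∨ x = y + Pi.single i 1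

open Classical in
/-- Nearest-neighbour coupling constants. -/
def nnJ {d : ℕ} {A : Type*} [AddGroup A] [One A] (x y : Fin d → A) : ℝ :=
  if nnAdj x y then 1 else 0

/-- The coordinates of the box `[-r/2, r/2) ∩ ℤ`. -/
def boxCoord (r : ℕ) : Finset ℤ :=
  (Finset.Icc (-(r : ℤ)) r).filter fun a => -(r : ℤ) ≤ 2 * a ∧ 2 * a < r

/-- The box `Λ_r = [-r/2, r/2)^d ∩ ℤ^d`. -/
def boxFinset (d r : ℕ) : Finset (Fin d → ℤ) := Fintype.piFinset fun _ => boxCoord r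

/-- The two-point function of the nearest-neighbour Ising model on the box `Λ_r`
(with free boundary conditions), extended by `0` off the box. -/
def boxTau (d r : ℕ) (β : ℝ) (x y : Fin d → ℤ) : ℝ :=
  if h : x ∈ boxFinset d r ∧ y ∈ boxFinset d r then
    corr (V := ↥(boxFinset d r)) (fun a b => nnJ a.val b.val) β ⟨x, h.1⟩ ⟨y, h.2⟩
  else 0

/-- The infinite-volume two-point function `τ_β(x) = lim_{r→∞} τ_β^{Λ_r}(0,x)`
(the limit exists by Griffiths monotonicity). -/
def tauZd (d : ℕ) (β : ℝ) (x : Fin d → ℤ) : ℝ :=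
  Filter.limUnder Filter.atTop fun r : ℕ => boxTau d r β 0 x

/-- The infinite-volume susceptibility `χ(β) = Σ_{x∈ℤ^d} τ_β(x)`. -/
def chi (d : ℕ) (β : ℝ) : ℝ := ∑' x : Fin d → ℤ, tauZd d β x

/-- The critical inverse temperature `β_c = sup {β > 0 : χ(β) < ∞}`. -/
def betaC (d : ℕ) : ℝ :=
  sSup {β : ℝ | 0 < β ∧ Summable fun x : Fin d → ℤ => tauZd d β x}

/-- The two-point function `⟨σ_x σ_y⟩` of the nearest-neighbour Ising model
on the torus `𝕋_r = (ℤ/rℤ)^d`. -/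
def torusCorr (d r : ℕ) (β : ℝ) (x y : Fin d → ZMod r) : ℝ :=
  if h : r = 0 then 0
  else
    haveI : NeZero r := ⟨h⟩
    corr (nnJ (d := d) (A := ZMod r)) β x y

/-- The torus two-point function `τ_β^{𝕋_r}(x) = ⟨σ_0 σ_x⟩`. -/
def torusTau (d r : ℕ) (β : ℝ) (x : Fin d → ZMod r) : ℝ := torusCorr d r β 0 x

/-- The torus susceptibility `χ^{𝕋_r}(β)`. -/
def chiT (d r : ℕ) (β : ℝ) : ℝ :=
  if h : r = 0 then 0
  else
    haveI : NeZero r := ⟨h⟩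
    ∑ x : Fin d → ZMod r, torusTau d r β x

/-- The torus bubble diagram `𝖡(β) = Σ_x τ_β^{𝕋_r}(x)²`. -/
def bubbleT (d r : ℕ) (β : ℝ) : ℝ :=
  if h : r = 0 then 0
  else
    haveI : NeZero r := ⟨h⟩
    ∑ x : Fin d → ZMod r, torusTau d r β x ^ 2

/-- The `k`-th moment `⟨S_r^k⟩` of the average spin `S_r = r^{-d} Σ_x σ_x` on the torus. -/
def avgSpinMoment (d r : ℕ) (β : ℝ) (k : ℕ) : ℝ :=
  if h : r = 0 then 0
  else
    haveI : NeZero r := ⟨h⟩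
    isingExpect (nnJ (d := d) (A := ZMod r)) β fun s =>
      (((r : ℝ) ^ d)⁻¹ * ∑ x : Fin d → ZMod r, s x) ^ k

/-- The renormalised coupling constant `g^{𝕋_r}(β)`. -/
def gT (d r : ℕ) (β : ℝ) : ℝ :=
  -(avgSpinMoment d r β 4 - 3 * avgSpinMoment d r β 2 ^ 2) / avgSpinMoment d r β 2 ^ 2

/-- The torus four-point function `⟨σ_x σ_y σ_z σ_w⟩`. -/
def torusCorr4 (d r : ℕ) (β : ℝ) (x y z w : Fin d → ZMod r) : ℝ :=
  if h : r = 0 then 0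
  else
    haveI : NeZero r := ⟨h⟩
    corr4 (nnJ (d := d) (A := ZMod r)) β x y z w

/-- The torus Ursell function `U_4^{𝕋_r}`. -/
def torusU4 (d r : ℕ) (β : ℝ) (x y z w : Fin d → ZMod r) : ℝ :=
  torusCorr4 d r β x y z w - torusCorr d r β x y * torusCorr d r β z w -
    torusCorr d r β x z * torusCorr d r β y w - torusCorr d r β x w * torusCorr d r β y z

/-- The representative in `Λ_r` of a point of the torus `𝕋_r`. -/
def rep {d : ℕ} (r : ℕ) (x : Fin d → ZMod r) : Fin d → ℤ :=
  fun i => if 2 * (x i).val < r then ((x i).val : ℤ) else ((x i).val : ℤ) - r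

/-- The canonical projection `π : ℤ^d → 𝕋_r`. -/
def proj (d r : ℕ) (x : Fin d → ℤ) : Fin d → ZMod r := fun i => (x i : ZMod r)

/-- The sup norm `‖x‖_∞` on `ℤ^d`. -/
def supNorm {d : ℕ} (x : Fin d → ℤ) : ℕ := Finset.univ.sup fun i => (x i).natAbs

/-- `T_β^{(r)}(x) = Σ_{u∈ℤ^d} τ_β(x + ru)`. -/
def Tfun (d r : ℕ) (β : ℝ) (x : Fin d → ℤ) : ℝ :=
  ∑' u : Fin d → ℤ, tauZd d β (x + r • u)

/-- `T_β^{(r)}` viewed as a function on the torus (it is `r`-periodic). -/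
def TfunT (d r : ℕ) (β : ℝ) (x : Fin d → ZMod r) : ℝ := Tfun d r β (rep r x)

/-- The lift `τ_β ∘ π` of the infinite-volume two-point function to the torus. -/
def tauT (d r : ℕ) (β : ℝ) (x : Fin d → ZMod r) : ℝ := tauZd d β (rep r x)

/-- Torus convolution `(f ⋆ g)(x) = Σ_{y ∈ 𝕋_r} f(y) g(x - y)`. -/
def torusConv {d r : ℕ} (f g : (Fin d → ZMod r) → ℝ) (x : Fin d → ZMod r) : ℝ :=
  if h : r = 0 then 0
  else
    haveI : NeZero r := ⟨h⟩
    ∑ y : Fin d → ZMod r, f y * g (x - y)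

/-- `ℤ^d` convolution `(f * g)(x) = Σ_{y ∈ ℤ^d} f(y) g(x - y)`. -/
def zdConv {d : ℕ} (f g : (Fin d → ℤ) → ℝ) (x : Fin d → ℤ) : ℝ :=
  ∑' y : Fin d → ℤ, f y * g (x - y)

/-- `T_β^{(r,R)}(x) = Σ_{x' ∈ Λ_R, x' ≅ x} τ_β^{Λ_R}(0, x')`. -/
def TfunRR (d r R : ℕ) (β : ℝ) (x : Fin d → ZMod r) : ℝ :=
  ∑ x' ∈ (boxFinset d R).filter (fun x' => proj d r x' = x), boxTau d R β 0 x'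

section Currents

variable {V : Type*} [Fintype V] [DecidableEq V]

/-- The space of currents on the finite graph `G`: an element of `ℕ` for each edge. -/
abbrev CurrentSpace (G : SimpleGraph V) [DecidableRel G.Adj] : Type _ :=
  ↥G.edgeFinset → ℕ

open Classical in
/-- The source set `∂n` of a current `n`. -/
def sources {G : SimpleGraph V} [DecidableRel G.Adj] (n : CurrentSpace G) : Finset V :=
  Finset.univ.filter fun x =>
    Odd (∑ e : ↥G.edgeFinset, if x ∈ (e : Sym2 V) then n e else 0)

/-- The weight `w_β(n) = Π_{e∈E} β^{n_e}/n_e!` of a current. -/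
def wgt {G : SimpleGraph V} [DecidableRel G.Adj] (β : ℝ) (n : CurrentSpace G) : ℝ :=
  ∏ e : ↥G.edgeFinset, β ^ n e / (n e).factorial

open Classical in
/-- The partition function `Z^A_G[E]` with sources `A`, restricted to the event `E`. -/
def Zev {G : SimpleGraph V} [DecidableRel G.Adj] (β : ℝ) (A : Finset V)
    (E : Set (CurrentSpace G)) : ℝ :=
  ∑' n : CurrentSpace G, if sources n = A ∧ n ∈ E then wgt β n else 0

open Classical in
/-- The double-current partition function `Z^{A,B}_{G,G}[E]` restricted to the event `E`. -/
def Zev2 {G : SimpleGraph V} [DecidableRel G.Adj] (β : ℝ) (A B : Finset V)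
    (E : Set (CurrentSpace G × CurrentSpace G)) : ℝ :=
  ∑' p : CurrentSpace G × CurrentSpace G,
    if sources p.1 = A ∧ sources p.2 = B ∧ p ∈ E then wgt β p.1 * wgt β p.2 else 0

/-- Connectivity `x ↔ y` in the current `n`, using only edges of the subgraph `H`. -/
def ConnectedIn {G : SimpleGraph V} [DecidableRel G.Adj] (n : CurrentSpace G)
    (H : SimpleGraph V) (x y : V) : Prop :=
  Relation.ReflTransGen
    (fun a b => H.Adj a b ∧ ∃ e : ↥G.edgeFinset, (e : Sym2 V) = s(a, b) ∧ 0 < n e) x y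

end Currents

/-!
For `x ∈ Λ_r` and `u ≠ 0` one has `r‖u‖ ≤ 2‖x + ru‖ ≤ 4r‖u‖`; together with `2‖u‖ ≥ ‖u‖ + 1`
this bounds the summand by `2^|a-d| r^(a-d) e^{-s} · ‖u‖^(a-d) e^{-s‖u‖}` with `s = μr/4`.
The shell `‖u‖ = k + 1` has at most `2d(2k+3)^(d-1)` points, which reduces the lattice sum to
`Σ_k (k+1)^(a-1) e^{-s(k+1)}`. This one-dimensional sum is `O(s^(-a))`: the increments
`(k+1)^a - k^a` dominate `min(1,a) (k+1)^(a-1)`, Abel summation with `q = e^{-s}` turns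
`Σ_k ((k+1)^a - k^a) q^(k+1)` into `(1 - q) Σ_k k^a q^k`, and `k^a e^{-sk/2} ≤ (2a/s)^a`.
-/

open Real Finset

lemma rpow_le_rpow_mul_exp {y p : ℝ} (hy : 0 ≤ y) (hp : 0 ≤ p) : y ^ p ≤ p ^ p * exp y := by
  rcases hp.eq_or_lt with rfl | hp
  · simpa using one_le_exp hy
  calc y ^ p = p ^ p * (y / p) ^ p := by
        rw [← mul_rpow hp.le (by positivity), mul_div_cancel₀ _ hp.ne']
    _ ≤ p ^ p * exp (y / p) ^ p := by gcongr; linarith [add_one_le_exp (y / p)]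
    _ = p ^ p * exp y := by rw [← exp_mul, div_mul_cancel₀ _ hp.ne']

lemma natCast_rpow_mul_exp_neg_pow_le {a s : ℝ} (ha : 0 ≤ a) (hs : 0 < s) (k : ℕ) :
    (k : ℝ) ^ a * exp (-s) ^ k ≤ (2 * a / s) ^ a * exp (-(s / 2)) ^ k := by
  have hk : (k : ℝ) ^ a ≤ (2 * a / s) ^ a * exp (s / 2 * k) :=
    calc (k : ℝ) ^ a = (2 / s) ^ a * (s / 2 * k) ^ a := by
          rw [← mul_rpow (by positivity) (by positivity)]; field_simp
      _ ≤ (2 / s) ^ a * (a ^ a * exp (s / 2 * k)) := by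
          gcongr; exact rpow_le_rpow_mul_exp (by positivity) ha
      _ = (2 * a / s) ^ a * exp (s / 2 * k) := by
          rw [← mul_assoc, ← mul_rpow (by positivity) ha]; ring_nf
  have he : exp (-s) ^ k = exp (-(s / 2)) ^ k * exp (-(s / 2 * k)) := by
    rw [← exp_nat_mul, ← exp_nat_mul, ← exp_add]; ring_nf
  calc (k : ℝ) ^ a * exp (-s) ^ k
      ≤ (2 * a / s) ^ a * exp (s / 2 * k) * (exp (-(s / 2)) ^ k * exp (-(s / 2 * k))) := by
        rw [he]; gcongr
    _ = (2 * a / s) ^ a * (exp (s / 2 * k) * exp (-(s / 2 * k))) * exp (-(s / 2)) ^ k := by ring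
    _ = (2 * a / s) ^ a * exp (-(s / 2)) ^ k := by rw [← exp_add, add_neg_cancel, exp_zero, mul_one]

lemma hasSum_sub_mul_pow_succ {f : ℕ → ℝ} {q : ℝ} (hf0 : f 0 = 0)
    (hf : Summable fun k ↦ f k * q ^ k) :
    HasSum (fun k ↦ (f (k + 1) - f k) * q ^ (k + 1)) ((1 - q) * ∑' k, f k * q ^ k) := by
  have h1 : HasSum (fun k ↦ f (k + 1) * q ^ (k + 1)) (∑' k, f k * q ^ k) := by
    simpa [hf0] using (hasSum_nat_add_iff' 1).mpr hf.hasSum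
  have h2 : HasSum (fun k ↦ f k * q ^ (k + 1)) (q * ∑' k, f k * q ^ k) := by
    simpa [pow_succ, mul_comm, mul_left_comm, mul_assoc] using hf.hasSum.mul_left q
  have h := h1.sub h2
  rw [← one_sub_mul] at h
  simpa only [sub_mul] using h

lemma min_one_mul_rpow_sub_one_le_rpow_sub_rpow {a x : ℝ} (ha : 0 ≤ a) (hx : 0 ≤ x) :
    min 1 a * (x + 1) ^ (a - 1) ≤ (x + 1) ^ a - x ^ a := by
  have hx1 : 0 < x + 1 := by linarith
  have hsplit : (x + 1) ^ a = (x + 1) ^ (a - 1) * (x + 1) := by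
    rw [← rpow_add_one hx1.ne']; ring_nf
  rcases le_total a 1 with ha1 | ha1
  · have hinv : (x + 1)⁻¹ ≤ 1 := inv_le_one_of_one_le₀ (by linarith)
    have hb := rpow_one_add_le_one_add_mul_self (s := -(x + 1)⁻¹) (by linarith) ha ha1
    have hx' : x ^ a = (x + 1) ^ a * (1 + -(x + 1)⁻¹) ^ a := by
      rw [← mul_rpow hx1.le (by linarith)]; congr 1; field_simp; ring
    have : x ^ a ≤ (x + 1) ^ a * (1 + a * -(x + 1)⁻¹) := by
      rw [hx']; gcongr
    rw [min_eq_right ha1, hsplit]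
    rw [hsplit] at this
    field_simp at this
    linarith
  · have : x ^ a ≤ (x + 1) ^ (a - 1) * x := by
      rw [show a = (a - 1) + 1 by ring, rpow_add' hx (by linarith), rpow_one, add_sub_cancel_right]
      gcongr; linarith
    rw [min_eq_left ha1]
    linarith

lemma summable_natCast_rpow_mul_exp_neg_pow {a s : ℝ} (ha : 0 ≤ a) (hs : 0 < s) :
    Summable fun k : ℕ ↦ (k : ℝ) ^ a * exp (-s) ^ k :=
  .of_nonneg_of_le (fun k ↦ by positivity) (natCast_rpow_mul_exp_neg_pow_le ha hs)
    ((summable_geometric_of_lt_one (exp_pos _).le (exp_lt_one_iff.mpr (by linarith))).mul_left _)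

lemma one_sub_exp_neg_mul_tsum_le {a s : ℝ} (ha : 0 ≤ a) (hs : 0 < s) :
    (1 - exp (-s)) * ∑' k : ℕ, (k : ℝ) ^ a * exp (-s) ^ k ≤ 2 * (2 * a / s) ^ a := by
  have hw1 : exp (-(s / 2)) < 1 := exp_lt_one_iff.mpr (by linarith)
  have hsq : exp (-s) = exp (-(s / 2)) ^ 2 := by rw [← exp_nat_mul]; ring_nf
  calc (1 - exp (-s)) * ∑' k : ℕ, (k : ℝ) ^ a * exp (-s) ^ k
      ≤ (1 - exp (-s)) * ∑' k : ℕ, (2 * a / s) ^ a * exp (-(s / 2)) ^ k :=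
        mul_le_mul_of_nonneg_left
          ((summable_natCast_rpow_mul_exp_neg_pow ha hs).tsum_le_tsum
            (natCast_rpow_mul_exp_neg_pow_le ha hs)
            ((summable_geometric_of_lt_one (exp_pos _).le hw1).mul_left _))
          (sub_nonneg.mpr (exp_le_one_iff.mpr (by linarith)))
    _ = (2 * a / s) ^ a * (1 + exp (-(s / 2))) := by
        rw [tsum_mul_left, tsum_geometric_of_lt_one (exp_pos _).le hw1, hsq]
        field_simp [(sub_pos.mpr hw1).ne']
        ring
    _ ≤ 2 * (2 * a / s) ^ a := by
        nlinarith [rpow_nonneg (by positivity : 0 ≤ 2 * a / s) a]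

theorem sum_range_rpow_mul_exp_neg_pow_le {a s : ℝ} (ha : 0 < a) (hs : 0 < s) (n : ℕ) :
    ∑ k ∈ range n, ((k : ℝ) + 1) ^ (a - 1) * exp (-s) ^ (k + 1) ≤
      2 * (2 * a) ^ a / min 1 a * s ^ (-a) := by
  have habel := hasSum_sub_mul_pow_succ (f := fun k : ℕ ↦ (k : ℝ) ^ a) (by simp [ha.ne'])
    (summable_natCast_rpow_mul_exp_neg_pow ha.le hs)
  have hmin : 0 < min 1 a := lt_min one_pos ha
  have hterm (k : ℕ) : ((k : ℝ) + 1) ^ (a - 1) * exp (-s) ^ (k + 1) ≤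
      (min 1 a)⁻¹ * ((((k + 1 : ℕ) : ℝ) ^ a - (k : ℝ) ^ a) * exp (-s) ^ (k + 1)) := by
    rw [Nat.cast_succ, ← mul_assoc]
    gcongr
    rw [le_inv_mul_iff₀ hmin]
    exact min_one_mul_rpow_sub_one_le_rpow_sub_rpow ha.le k.cast_nonneg
  calc ∑ k ∈ range n, ((k : ℝ) + 1) ^ (a - 1) * exp (-s) ^ (k + 1)
      ≤ ∑ k ∈ range n,
          (min 1 a)⁻¹ * ((((k + 1 : ℕ) : ℝ) ^ a - (k : ℝ) ^ a) * exp (-s) ^ (k + 1)) :=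
        sum_le_sum fun k _ ↦ hterm k
    _ ≤ (min 1 a)⁻¹ * ((1 - exp (-s)) * ∑' k : ℕ, (k : ℝ) ^ a * exp (-s) ^ k) := by
        rw [← mul_sum, ← habel.tsum_eq]
        gcongr
        refine habel.summable.sum_le_tsum _ fun k _ ↦ ?_
        have := (mul_nonneg (by positivity) (by positivity)).trans (hterm k)
        exact (mul_nonneg_iff_of_pos_left (inv_pos.mpr hmin)).mp this
    _ ≤ (min 1 a)⁻¹ * (2 * (2 * a / s) ^ a) := by
        grw [one_sub_exp_neg_mul_tsum_le ha.le hs]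
    _ = 2 * (2 * a) ^ a / min 1 a * s ^ (-a) := by
        rw [div_rpow (by positivity) hs.le, rpow_neg hs.le]; ring

section SupNorm

variable {d : ℕ}

lemma natAbs_le_supNorm (u : Fin d → ℤ) (i : Fin d) : (u i).natAbs ≤ supNorm u :=
  Finset.le_sup (f := fun i ↦ (u i).natAbs) (mem_univ i)

lemma supNorm_le_iff {u : Fin d → ℤ} {n : ℕ} : supNorm u ≤ n ↔ ∀ i, (u i).natAbs ≤ n := by
  simp [supNorm]

lemma one_le_supNorm {u : Fin d → ℤ} (hu : u ≠ 0) : 1 ≤ supNorm u := by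
  obtain ⟨i, hi⟩ := Function.ne_iff.mp hu
  exact (Int.natAbs_pos.mpr hi).trans_le (natAbs_le_supNorm u i)

def supNormBall (d n : ℕ) : Finset (Fin d → ℤ) :=
  Fintype.piFinset fun _ ↦ Icc (-(n : ℤ)) n

lemma mem_supNormBall {n : ℕ} {u : Fin d → ℤ} : u ∈ supNormBall d n ↔ supNorm u ≤ n := by
  simp only [supNormBall, Fintype.mem_piFinset, mem_Icc, supNorm_le_iff]
  exact forall_congr' fun i ↦ by omega

lemma monotone_supNormBall : Monotone (supNormBall d) := fun _ _ hmn _ hu ↦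
  mem_supNormBall.mpr ((mem_supNormBall.mp hu).trans hmn)

lemma supNormBall_zero : supNormBall d 0 = {0} := by
  ext u
  rw [mem_supNormBall, supNorm_le_iff, mem_singleton, funext_iff]
  simp

lemma card_supNormBall_succ_sdiff_le (k : ℕ) :
    #(supNormBall d (k + 1) \ supNormBall d k) ≤ 2 * d * (2 * k + 3) ^ (d - 1) := by
  rw [card_sdiff_of_subset (monotone_supNormBall k.le_succ)]
  simp only [supNormBall, Fintype.card_piFinset, Int.card_Icc, prod_const, card_univ,
    Fintype.card_fin]
  rw [show (((k + 1 : ℕ) : ℤ) + 1 - -((k + 1 : ℕ) : ℤ)).toNat = 2 * k + 3 by omega,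
    show ((k : ℤ) + 1 - -(k : ℤ)).toNat = 2 * k + 1 by omega]
  grind [abs_pow_sub_pow_le (α := ℤ) (2 * k + 3) (2 * k + 1) d]

lemma sum_supNormBall_erase_zero {M : Type*} [AddCommGroup M] (G : ℕ → M) (n : ℕ) :
    ∑ u ∈ (supNormBall d n).erase 0, G (supNorm u) =
      ∑ k ∈ range n, #(supNormBall d (k + 1) \ supNormBall d k) • G (k + 1) := by
  have h0 : (0 : Fin d → ℤ) ∈ supNormBall d n := mem_supNormBall.mpr (by simp [supNorm])
  rw [sum_erase_eq_sub h0, sum_eq_sum_range_sdiff _ monotone_supNormBall, supNormBall_zero,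
    sum_singleton, add_sub_cancel_left]
  refine sum_congr rfl fun k _ ↦ (sum_congr rfl fun u hu ↦ ?_).trans (sum_const _)
  rw [mem_sdiff, mem_supNormBall, mem_supNormBall] at hu
  rw [show supNorm u = k + 1 by omega]

lemma card_supNormBall_succ_sdiff_mul_rpow_le (a : ℝ) (k : ℕ) :
    (#(supNormBall d (k + 1) \ supNormBall d k) : ℝ) * ((k : ℝ) + 1) ^ (a - d) ≤
      2 * d * 3 ^ (d - 1) * ((k : ℝ) + 1) ^ (a - 1) := by
  have hcard := card_supNormBall_succ_sdiff_le (d := d) k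
  rcases Nat.eq_zero_or_pos d with rfl | hd
  · have : #(supNormBall 0 (k + 1) \ supNormBall 0 k) = 0 := by simpa using hcard
    simp [this]
  have hcard' : (#(supNormBall d (k + 1) \ supNormBall d k) : ℝ) ≤
      2 * d * 3 ^ (d - 1) * ((k : ℝ) + 1) ^ (d - 1) := by
    calc (#(supNormBall d (k + 1) \ supNormBall d k) : ℝ)
        ≤ ((2 * d * (3 * (k + 1)) ^ (d - 1) : ℕ) : ℝ) := by
          exact_mod_cast hcard.trans (by gcongr; omega)
      _ = 2 * d * 3 ^ (d - 1) * ((k : ℝ) + 1) ^ (d - 1) := by push_cast; rw [mul_pow]; ring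
  calc (#(supNormBall d (k + 1) \ supNormBall d k) : ℝ) * ((k : ℝ) + 1) ^ (a - d)
      ≤ 2 * d * 3 ^ (d - 1) * ((k : ℝ) + 1) ^ (d - 1) * ((k : ℝ) + 1) ^ (a - d) := by gcongr
    _ = 2 * d * 3 ^ (d - 1) * ((k : ℝ) + 1) ^ (a - 1) := by
        rw [mul_assoc, ← rpow_natCast ((k : ℝ) + 1), ← rpow_add (by positivity), Nat.cast_sub hd]
        ring_nf

theorem sum_supNorm_rpow_mul_exp_neg_pow_le {a s : ℝ} (ha : 0 < a) (hs : 0 < s)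
    (F : Finset {u : Fin d → ℤ // u ≠ 0}) :
    ∑ u ∈ F, (supNorm u.1 : ℝ) ^ (a - d) * exp (-s) ^ supNorm u.1 ≤
      2 * d * 3 ^ (d - 1) * (2 * (2 * a) ^ a / min 1 a) * s ^ (-a) := by
  set n := F.sup fun u ↦ supNorm u.1
  have hsub : F.map (.subtype _) ⊆ (supNormBall d n).erase 0 := by
    intro v hv
    obtain ⟨u, hu, rfl⟩ := mem_map.mp hv
    exact mem_erase.mpr ⟨u.2, mem_supNormBall.mpr (le_sup (f := fun u ↦ supNorm u.1) hu)⟩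
  calc ∑ u ∈ F, (supNorm u.1 : ℝ) ^ (a - d) * exp (-s) ^ supNorm u.1
      = ∑ v ∈ F.map (.subtype _), (supNorm v : ℝ) ^ (a - d) * exp (-s) ^ supNorm v := by
        rw [sum_map]; rfl
    _ ≤ ∑ v ∈ (supNormBall d n).erase 0, (supNorm v : ℝ) ^ (a - d) * exp (-s) ^ supNorm v :=
        sum_le_sum_of_subset_of_nonneg hsub fun _ _ _ ↦ by positivity
    _ = ∑ k ∈ range n, #(supNormBall d (k + 1) \ supNormBall d k) •
          (((k + 1 : ℕ) : ℝ) ^ (a - d) * exp (-s) ^ (k + 1)) :=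
        sum_supNormBall_erase_zero (fun m ↦ (m : ℝ) ^ (a - d) * exp (-s) ^ m) n
    _ ≤ ∑ k ∈ range n, 2 * d * 3 ^ (d - 1) * (((k : ℝ) + 1) ^ (a - 1) * exp (-s) ^ (k + 1)) := by
        gcongr with k
        rw [nsmul_eq_mul, ← mul_assoc, ← mul_assoc, Nat.cast_succ]
        exact mul_le_mul_of_nonneg_right (card_supNormBall_succ_sdiff_mul_rpow_le a k)
          (by positivity)
    _ ≤ 2 * d * 3 ^ (d - 1) * (2 * (2 * a) ^ a / min 1 a) * s ^ (-a) := by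
        rw [← mul_sum, mul_assoc _ (2 * (2 * a) ^ a / min 1 a)]
        gcongr
        exact sum_range_rpow_mul_exp_neg_pow_le ha hs n

end SupNorm

section Box

variable {d r : ℕ} {x : Fin d → ℤ}

lemma two_mul_natAbs_le_of_mem_boxFinset (hx : x ∈ boxFinset d r) (i : Fin d) :
    2 * (x i).natAbs ≤ r := by
  have := Fintype.mem_piFinset.mp hx i
  simp only [boxCoord, mem_filter, mem_Icc] at this
  omega

lemma natAbs_add_nsmul_apply (u : Fin d → ℤ) (i : Fin d) :
    ((x + r • u) i).natAbs = (x i + r * u i).natAbs := by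
  simp [nsmul_eq_mul]

lemma mul_supNorm_le_two_mul_supNorm_add_nsmul (hx : ∀ i, 2 * (x i).natAbs ≤ r) (hr : 0 < r)
    (u : Fin d → ℤ) : r * supNorm u ≤ 2 * supNorm (x + r • u) := by
  rw [mul_comm, ← Nat.le_div_iff_mul_le hr, supNorm_le_iff]
  intro i
  rw [Nat.le_div_iff_mul_le hr]
  have hN := natAbs_le_supNorm (x + r • u) i
  rw [natAbs_add_nsmul_apply] at hN
  have htri : (r * u i).natAbs ≤ (x i + r * u i).natAbs + (x i).natAbs := by
    simpa using Int.natAbs_sub_le (x i + r * u i) (x i)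
  rw [Int.natAbs_mul, Int.natAbs_natCast] at htri
  rcases eq_or_ne (u i) 0 with h | h
  · simp [h]
  have := Nat.mul_le_mul_left r (Int.natAbs_pos.mpr h)
  have := hx i
  nlinarith

lemma supNorm_add_nsmul_le (hx : ∀ i, 2 * (x i).natAbs ≤ r) {u : Fin d → ℤ} (hu : u ≠ 0) :
    supNorm (x + r • u) ≤ 2 * (r * supNorm u) := by
  rw [supNorm_le_iff]
  intro i
  rw [natAbs_add_nsmul_apply]
  have := Int.natAbs_add_le (x i) (r * u i)
  rw [Int.natAbs_mul, Int.natAbs_natCast] at this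
  have := Nat.mul_le_mul_left r (natAbs_le_supNorm u i)
  have := Nat.mul_le_mul_left r (one_le_supNorm hu)
  have := hx i
  omega

lemma rpow_le_two_rpow_abs_mul_rpow {y z : ℝ} (hy : 0 < y) (h₁ : y ≤ 2 * z) (h₂ : z ≤ 2 * y)
    (p : ℝ) : z ^ p ≤ 2 ^ |p| * y ^ p := by
  rcases le_total 0 p with hp | hp
  · calc z ^ p ≤ (2 * y) ^ p := by gcongr; linarith
      _ = 2 ^ |p| * y ^ p := by rw [mul_rpow zero_le_two hy.le, abs_of_nonneg hp]
  · calc z ^ p ≤ (y / 2) ^ p := rpow_le_rpow_of_nonpos (by positivity) (by linarith) hp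
      _ = 2 ^ |p| * y ^ p := by
          rw [div_rpow hy.le zero_le_two, abs_of_nonpos hp, rpow_neg zero_le_two]; ring

theorem rpow_supNorm_add_nsmul_mul_exp_le (hx : x ∈ boxFinset d r) (hr : 0 < r)
    {u : Fin d → ℤ} (hu : u ≠ 0) {μ : ℝ} (hμ : 0 < μ) (p : ℝ) :
    (supNorm (x + r • u) : ℝ) ^ p * exp (-μ * supNorm (x + r • u)) ≤
      2 ^ |p| * (r : ℝ) ^ p * exp (-(μ * r / 4)) *
        ((supNorm u : ℝ) ^ p * exp (-(μ * r / 4)) ^ supNorm u) := by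
  have hx' := two_mul_natAbs_le_of_mem_boxFinset hx
  have hm : (1 : ℝ) ≤ supNorm u := by exact_mod_cast one_le_supNorm hu
  have hlow : (r : ℝ) * supNorm u ≤ 2 * supNorm (x + r • u) := by
    exact_mod_cast mul_supNorm_le_two_mul_supNorm_add_nsmul hx' hr u
  have hup : (supNorm (x + r • u) : ℝ) ≤ 2 * ((r : ℝ) * supNorm u) := by
    exact_mod_cast supNorm_add_nsmul_le hx' hu
  have hpow : (supNorm (x + r • u) : ℝ) ^ p ≤ 2 ^ |p| * (r : ℝ) ^ p * (supNorm u : ℝ) ^ p := by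
    rw [mul_assoc, ← mul_rpow (by positivity) (by positivity)]
    exact rpow_le_two_rpow_abs_mul_rpow (by positivity) hlow hup p
  have hexp : exp (-μ * supNorm (x + r • u)) ≤
      exp (-(μ * r / 4)) * exp (-(μ * r / 4)) ^ supNorm u := by
    rw [← exp_nat_mul, ← exp_add, exp_le_exp]
    have hμr : 0 ≤ μ * r := by positivity
    nlinarith [mul_le_mul_of_nonneg_left hlow hμ.le, mul_le_mul_of_nonneg_left hm hμr]
  calc (supNorm (x + r • u) : ℝ) ^ p * exp (-μ * supNorm (x + r • u))
      ≤ 2 ^ |p| * (r : ℝ) ^ p * (supNorm u : ℝ) ^ p *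
          (exp (-(μ * r / 4)) * exp (-(μ * r / 4)) ^ supNorm u) :=
        mul_le_mul hpow hexp (by positivity) (by positivity)
    _ = _ := by ring

end Box

/-- For `d ≥ 1`, `a > 0` there is `C = C(d,a) > 0` such that for all
`r ≥ 1`, `μ > 0` and `x ∈ Λ_r`,
`Σ_{u≠0} ‖x+ru‖_∞^{-(d-a)} e^{-μ‖x+ru‖_∞} ≤ C e^{-μr/4} μ^{-a} r^{-d}`. -/
theorem lattice_sum_estimate (d : ℕ) (hd : 1 ≤ d) (a : ℝ) (ha : 0 < a) :
    ∃ C : ℝ, 0 < C ∧ ∀ r : ℕ, 1 ≤ r → ∀ μ : ℝ, 0 < μ → ∀ x ∈ boxFinset d r,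
      ∑' u : {u : Fin d → ℤ // u ≠ 0},
          ((supNorm (x + r • (u : Fin d → ℤ)) : ℝ)) ^ (-((d : ℝ) - a)) *
            Real.exp (-μ * (supNorm (x + r • (u : Fin d → ℤ)) : ℝ)) ≤
        C * Real.exp (-μ * r / 4) * μ ^ (-a) * ((r : ℝ) ^ d)⁻¹ := by
  set K := 2 * d * 3 ^ (d - 1) * (2 * (2 * a) ^ a / min 1 a)
  have hK : 0 < K := by
    have : 0 < min 1 a := lt_min one_pos ha
    have : (0 : ℝ) < d := by exact_mod_cast hd
    positivity
  refine ⟨2 ^ |a - d| * K * 4 ^ a, by positivity, fun r hr μ hμ x hx ↦ ?_⟩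
  have hr' : (0 : ℝ) < r := by exact_mod_cast hr
  have ht : 0 < μ * r / 4 := by positivity
  have hsum (F : Finset {u : Fin d → ℤ // u ≠ 0}) :
      ∑ u ∈ F, ((supNorm (x + r • u.1) : ℝ)) ^ (-((d : ℝ) - a)) *
          exp (-μ * (supNorm (x + r • u.1) : ℝ)) ≤
        2 ^ |a - d| * (r : ℝ) ^ (a - d) * exp (-(μ * r / 4)) * (K * (μ * r / 4) ^ (-a)) := by
    calc _ ≤ ∑ u ∈ F, 2 ^ |a - d| * (r : ℝ) ^ (a - d) * exp (-(μ * r / 4)) *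
            ((supNorm u.1 : ℝ) ^ (a - d) * exp (-(μ * r / 4)) ^ supNorm u.1) := by
          refine sum_le_sum fun u _ ↦ ?_
          rw [neg_sub]
          exact rpow_supNorm_add_nsmul_mul_exp_le hx hr u.2 hμ _
      _ ≤ _ := by
          rw [← mul_sum]
          gcongr
          exact sum_supNorm_rpow_mul_exp_neg_pow_le ha ht F
  calc _ ≤ 2 ^ |a - d| * (r : ℝ) ^ (a - d) * exp (-(μ * r / 4)) * (K * (μ * r / 4) ^ (-a)) :=
        Real.tsum_le_of_sum_le (fun u ↦ by positivity) hsum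
    _ = _ := by
        rw [rpow_sub hr', rpow_natCast, div_rpow (by positivity) (by norm_num),
          mul_rpow hμ.le hr'.le, rpow_neg hμ.le, rpow_neg hr'.le,
          rpow_neg (by norm_num : (0 : ℝ) ≤ 4), neg_mul, neg_div]
        field_simp

end IsingPlateau
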